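/- Let n ≥ 3, α > 0, and let φ be the maximal solution of the initial value problem φ'' + ((n+1)/y − y/2)φ' + nφ² + yφφ' − φ = 0 on (0, y*), φ(0) = α, φ'(0) = 0, where y* = y*_α ∈ (0,∞] is the maximal existence time (i.e., φ is a C² solution on [0, y*) which cannot be extended to a C² solution on any larger interval). If y* < ∞, then either lim_{y→y*⁻} φ(y) = +∞ or lim_{y→y*⁻} φ(y) = −∞. -/

import Mathlib

/-!
Along a solution the energy `E = φ'²/2 + nφ³/3 - φ²/2` satisfies
`E' = -((n+1)/y - y/2 + yφ) φ'²`. If `φ ≥ m` on `[c, y*)`, the coefficient is at most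
`y* (1/2 - m)` and the potential is bounded below, so Gronwall bounds `E`; the cubic potential
being coercive, `φ` and `φ'` stay bounded, and Picard–Lindelöf with uniqueness continues the
solution past `y* < ∞`, contradicting maximality. So `φ` is unbounded below near `y*`. As
`φ(0) = α > 0`, some point has `φ < 0` and `φ' < 0`, and from there on `φ'` stays negative: at a
first zero of `φ'` the equation would give `φ'' = φ - nφ² < 0`. Hence `φ` decreases to `-∞`; the
alternative `φ → +∞` never occurs.
-/

open Real Set Filter
open scoped Topology

noncomputable section

/-- `φ` is a `C²` solution on `[0,b)` of the self-similar profile equation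
`φ'' + ((n+1)/y - y/2)φ' + nφ² + yφφ' - φ = 0` with `φ(0) = α`, `φ'(0) = 0`. -/
def IsPhiSolOn (n : ℕ) (α b : ℝ) (φ : ℝ → ℝ) : Prop :=
  φ 0 = α ∧ deriv φ 0 = 0 ∧
    (∀ y : ℝ, 0 ≤ y → y < b →
      DifferentiableAt ℝ φ y ∧ DifferentiableAt ℝ (deriv φ) y) ∧
    ContinuousOn (deriv (deriv φ)) (Ico (0:ℝ) b) ∧
    ∀ y : ℝ, 0 < y → y < b →
      deriv (deriv φ) y + (((n : ℝ) + 1) / y - y / 2) * deriv φ y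
        + (n : ℝ) * φ y ^ 2 + y * φ y * deriv φ y - φ y = 0

open scoped NNReal

section RealAnalysis

variable {f : ℝ → ℝ} {a b : ℝ}

theorem ContinuousOn.exists_first_zero (hab : a ≤ b) (hf : ContinuousOn f (Icc a b))
    (ha : f a < 0) (hb : 0 ≤ f b) : ∃ z ∈ Ioc a b, f z = 0 ∧ ∀ y ∈ Ico a z, f y < 0 := by
  have hS : IsCompact (Icc a b ∩ f ⁻¹' Ici 0) :=
    isCompact_Icc.of_isClosed_subset (hf.preimage_isClosed_of_isClosed isClosed_Icc isClosed_Ici)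
      inter_subset_left
  obtain ⟨z, ⟨hz, hfz⟩, hleast⟩ := hS.exists_isLeast ⟨b, ⟨hab, le_rfl⟩, hb⟩
  have haz : a < z := hz.1.lt_of_ne (by rintro rfl; exact (not_le.2 ha) hfz)
  have hneg : ∀ y ∈ Ico a z, f y < 0 := fun y hy =>
    not_le.1 fun h => (not_le.2 hy.2) (hleast ⟨⟨hy.1, hy.2.le.trans hz.2⟩, h⟩)
  refine ⟨z, ⟨haz, hz.2⟩, le_antisymm ?_ hfz, hneg⟩
  have hcont : ContinuousWithinAt f (Ico a z) z :=
    (hf z hz).mono (Ico_subset_Icc_self.trans (Icc_subset_Icc_right hz.2))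
  refine ContinuousWithinAt.closure_le ?_ hcont continuousWithinAt_const fun y hy => (hneg y hy).le
  rw [closure_Ico haz.ne]
  exact right_mem_Icc.2 haz.le

theorem ContinuousOn.exists_last_nonneg (hab : a ≤ b) (hf : ContinuousOn f (Icc a b))
    (ha : 0 ≤ f a) (hb : f b < 0) : ∃ z ∈ Ico a b, 0 ≤ f z ∧ ∀ y ∈ Ioc z b, f y < 0 := by
  have hS : IsCompact (Icc a b ∩ f ⁻¹' Ici 0) :=
    isCompact_Icc.of_isClosed_subset (hf.preimage_isClosed_of_isClosed isClosed_Icc isClosed_Ici)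
      inter_subset_left
  obtain ⟨z, ⟨hz, hfz⟩, hgreatest⟩ := hS.exists_isGreatest ⟨a, ⟨le_rfl, hab⟩, ha⟩
  refine ⟨z, ⟨hz.1, hz.2.lt_of_ne ?_⟩, hfz, fun y hy => not_le.1 fun h => ?_⟩
  · rintro rfl; exact (not_le.2 hb) hfz
  · exact (not_le.2 hy.1) (hgreatest ⟨⟨hz.1.trans hy.1.le, hy.2⟩, h⟩)

theorem le_mul_exp_of_hasDerivAt_le_mul {u u' : ℝ → ℝ} {K : ℝ} (hK : 0 ≤ K)
    (hu : ∀ x ∈ Ico a b, HasDerivAt u (u' x) x) (hu' : ∀ x ∈ Ico a b, u' x ≤ K * u x) :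
    ∀ x ∈ Ico a b, u x ≤ |u a| * exp (K * (b - a)) := by
  intro x hx
  have hsub : Icc a x ⊆ Ico a b := Icc_subset_Ico_right hx.2
  have hgron := le_gronwallBound_of_liminf_deriv_right_le (f' := u') (δ := |u a|) (ε := 0)
    (fun y hy => (hu y (hsub hy)).continuousAt.continuousWithinAt)
    (fun y hy r hr => ((hu y (hsub (Ico_subset_Icc_self hy))).hasDerivWithinAt.liminf_right_slope_le
      hr).mono fun z hz => by rwa [slope_def_field, div_eq_inv_mul] at hz)
    (le_abs_self _) (fun y hy => by simpa using hu' y (hsub (Ico_subset_Icc_self hy)))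
    x ⟨hx.1, le_rfl⟩
  rw [gronwallBound_ε0] at hgron
  exact hgron.trans (by gcongr; linarith [hx.2])

theorem HasDerivAt.nonneg_of_forall_mem_Ioo_le {f' : ℝ} (hf : HasDerivAt f f' b) (hab : a < b)
    (hle : ∀ y ∈ Ioo a b, f y ≤ f b) : 0 ≤ f' := by
  refine ge_of_tendsto ((hasDerivAt_iff_tendsto_slope.1 hf).mono_left
    (nhdsWithin_mono b (s := Iio b) fun y hy => (mem_Iio.1 hy).ne)) ?_
  filter_upwards [Ioo_mem_nhdsLT hab] with y hy
  rw [slope_def_field]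
  exact div_nonneg_of_nonpos (sub_nonpos.2 (hle y hy)) (sub_nonpos.2 hy.2.le)

end RealAnalysis

theorem AntitoneOn.tendsto_nhdsLT_atBot {α β : Type*} [LinearOrder α] [TopologicalSpace α]
    [OrderTopology α] [LinearOrder β] {f : α → β} {a b : α} (hf : AntitoneOn f (Ico a b))
    (hbdd : ¬ BddBelow (f '' Ico a b)) : Tendsto f (𝓝[<] b) atBot := by
  refine tendsto_atBot.2 fun M => ?_
  obtain ⟨_, ⟨y, hy, rfl⟩, hyM⟩ := not_bddBelow_iff.1 hbdd M
  filter_upwards [Ioo_mem_nhdsLT hy.2] with z hz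
  exact (hf hy ⟨hy.1.trans hz.1.le, hz.2⟩ hz.1.le).trans hyM.le

section ODEContinuation

open Metric Function

variable {E : Type*} [NormedAddCommGroup E] [NormedSpace ℝ E]

theorem exists_forall_mem_Icc_mem_hasDerivWithinAt_of_subset [CompleteSpace E] {v : ℝ → E → E}
    {s : Set E} {t₀ t₁ : ℝ} {x₀ : E} {L C : ℝ≥0} (ht₀₁ : t₀ ≤ t₁) (hCt : C * (t₁ - t₀) ≤ 1)
    (hx₀ : closedBall x₀ 1 ⊆ s) (hlip : ∀ t ∈ Icc t₀ t₁, LipschitzOnWith L (v t) s)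
    (hcont : ∀ x ∈ s, ContinuousOn (v · x) (Icc t₀ t₁))
    (hC : ∀ t ∈ Icc t₀ t₁, ∀ x ∈ s, ‖v t x‖ ≤ C) :
    ∃ f : ℝ → E, f t₀ = x₀ ∧ ∀ t ∈ Icc t₀ t₁,
      f t ∈ s ∧ HasDerivWithinAt f (v t (f t)) (Icc t₀ t₁) t := by
  have hx₀' : closedBall x₀ ((1 : ℝ≥0) : ℝ) ⊆ s := by simpa using hx₀
  let t₀' : Icc t₀ t₁ := ⟨t₀, left_mem_Icc.2 ht₀₁⟩
  have hpl : IsPicardLindelof v t₀' x₀ 1 0 C L :=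
    { lipschitzOnWith := fun t ht => (hlip t ht).mono hx₀'
      continuousOn := fun x hx => hcont x (hx₀' hx)
      norm_le := fun t ht x hx => hC t ht x (hx₀' hx)
      mul_max_le := by simpa [t₀', max_eq_left (sub_nonneg.2 ht₀₁)] using hCt }
  obtain ⟨α, hα⟩ := ODE.FunSpace.exists_isFixedPt_next hpl (mem_closedBall_self le_rfl)
  refine ⟨α.compProj, ?_, fun t ht => ⟨hx₀' (α.compProj_mem_closedBall hpl.mul_max_le), ?_⟩⟩
  · exact (ODE.FunSpace.compProj_val (t := t₀')).trans (by rw [← hα, ODE.FunSpace.next_apply₀])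
  · refine ODE.hasDerivWithinAt_picard_Icc t₀'.2 hpl.continuousOn_uncurry
      α.continuous_compProj.continuousOn
      (fun _ _ => α.compProj_mem_closedBall hpl.mul_max_le) x₀ ht |>.congr_of_mem
      (fun t' ht' => ?_) ht
    nth_rw 1 [← hα]
    rw [ODE.FunSpace.compProj_of_mem ht', ODE.FunSpace.next_apply]

theorem ContDiffOn.exists_lipschitzOnWith_norm_le_of_subset [FiniteDimensional ℝ E]
    {v : ℝ → E → E} {U : Set (ℝ × E)} (hv : ContDiffOn ℝ 1 (uncurry v) U) {c T R : ℝ}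
    (hU : Icc c T ×ˢ closedBall 0 R ⊆ U) :
    ∃ L C : ℝ≥0, (∀ t ∈ Icc c T, LipschitzOnWith L (v t) (closedBall 0 R)) ∧
      ∀ t ∈ Icc c T, ∀ x ∈ closedBall 0 R, ‖v t x‖ ≤ C := by
  have hbox : IsCompact (Icc c T ×ˢ closedBall (0 : E) R) :=
    isCompact_Icc.prod (isCompact_closedBall 0 R)
  obtain ⟨L, hL⟩ := (hv.mono hU).exists_lipschitzOnWith one_ne_zero
    ((convex_Icc c T).prod (convex_closedBall 0 R)) hbox
  obtain ⟨C, hC⟩ := hbox.exists_bound_of_continuousOn (hv.continuousOn.mono hU)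
  refine ⟨L, C.toNNReal, fun t ht => ?_, fun t ht x hx =>
    (hC (t, x) ⟨ht, hx⟩).trans (Real.le_coe_toNNReal C)⟩
  simpa [Function.comp_def] using
    hL.comp (LipschitzWith.prodMk_left t).lipschitzOnWith fun x hx => ⟨ht, hx⟩

theorem hasDerivAt_piecewise_of_eqOn {v : ℝ → E → E} {g f : ℝ → E} {a t₀ b b' : ℝ} (ht₀ : t₀ < b)
    (hg : ∀ t ∈ Ioo a b, HasDerivAt g (v t (g t)) t)
    (hf : ∀ t ∈ Ioo t₀ b', HasDerivAt f (v t (f t)) t) (hgf : EqOn g f (Ico t₀ b)) :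
    ∀ t ∈ Ioo a b', HasDerivAt ((Iio b).piecewise g f) (v t ((Iio b).piecewise g f t)) t := by
  set h := (Iio b).piecewise g f
  have hhg : EqOn h g (Iio b) := fun t ht => piecewise_eq_of_mem (Iio b) g f ht
  have hhf : EqOn h f (Ioi t₀) := fun t ht => by
    by_cases htb : t < b
    · exact (hhg htb).trans (hgf ⟨(mem_Ioi.1 ht).le, htb⟩)
    · exact piecewise_eq_of_notMem (Iio b) g f htb
  intro t ht
  by_cases htb : t < b
  · rw [hhg htb]
    exact (hg t ⟨ht.1, htb⟩).congr_of_eventuallyEq (eventuallyEq_of_mem (Iio_mem_nhds htb) hhg)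
  · have ht' : t ∈ Ioo t₀ b' := ⟨ht₀.trans_le (not_lt.1 htb), ht.2⟩
    rw [hhf ht'.1]
    exact (hf t ht').congr_of_eventuallyEq (eventuallyEq_of_mem (Ioi_mem_nhds ht'.1) hhf)

theorem exists_hasDerivAt_extension_of_norm_le [FiniteDimensional ℝ E]
    {v : ℝ → E → E} {g : ℝ → E} {a b ρ : ℝ} (hab : a < b)
    (hv : ContDiffOn ℝ 1 (uncurry v) (Ioi a ×ˢ univ))
    (hg : ∀ t ∈ Ioo a b, HasDerivAt g (v t (g t)) t) (hgρ : ∀ t ∈ Ioo a b, ‖g t‖ ≤ ρ) :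
    ∃ b' > b, ∃ h : ℝ → E, EqOn h g (Iio b) ∧ ∀ t ∈ Ioo a b', HasDerivAt h (v t (h t)) t := by
  obtain ⟨L, C, hL, hC⟩ := hv.exists_lipschitzOnWith_norm_le_of_subset (c := (a + b) / 2)
    (T := b + 1) (R := ρ + 1) fun p hp => ⟨show a < p.1 by linarith [hp.1.1], trivial⟩
  -- restart from `g (b - δ/2)`: `C δ ≤ 1` keeps the solution in the unit ball around it up to
  -- time `b + δ/2`, where `L` and `C` are valid
  set δ := min (min ((b - a) / 2) 1) (1 / (C + 1))
  have hδ : 0 < δ := lt_min (lt_min (by linarith) one_pos) (by positivity)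
  have hδa : δ ≤ (b - a) / 2 := (min_le_left _ _).trans (min_le_left _ _)
  have hδ1 : δ ≤ 1 := (min_le_left _ _).trans (min_le_right _ _)
  have hCδ : C * (b + δ / 2 - (b - δ / 2)) ≤ 1 := by
    calc (C : ℝ) * (b + δ / 2 - (b - δ / 2)) ≤ C * (1 / (C + 1)) := by
          gcongr; linarith [min_le_right (min ((b - a) / 2) 1) (1 / ((C : ℝ) + 1))]
      _ ≤ 1 := by rw [mul_one_div, div_le_one (by positivity)]; linarith
  have hIcc : Icc (b - δ / 2) (b + δ / 2) ⊆ Icc ((a + b) / 2) (b + 1) :=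
    Icc_subset_Icc (by linarith) (by linarith)
  have hball : closedBall (g (b - δ / 2)) 1 ⊆ closedBall 0 (ρ + 1) := by
    refine closedBall_subset_closedBall' ?_
    rw [dist_zero_right]
    linarith [hgρ (b - δ / 2) ⟨by linarith, by linarith⟩]
  obtain ⟨f, hf₀, hf⟩ := exists_forall_mem_Icc_mem_hasDerivWithinAt_of_subset (by linarith) hCδ
    hball (fun t ht => hL t (hIcc ht)) (fun x _ => hv.continuousOn.comp
      (continuousOn_id.prodMk continuousOn_const) fun t ht =>
        ⟨show a < t by linarith [ht.1], trivial⟩)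
    fun t ht => hC t (hIcc ht)
  have hgf : EqOn g f (Ico (b - δ / 2) b) := fun t ht =>
    ODE_solution_unique_of_mem_Icc_right (s := fun _ => closedBall 0 (ρ + 1))
      (fun s hs => hL s (hIcc ⟨hs.1, by linarith [hs.2, ht.2]⟩))
      (fun s hs => (hg s ⟨by linarith [hs.1], hs.2.trans_lt ht.2⟩).continuousAt.continuousWithinAt)
      (fun s hs => (hg s ⟨by linarith [hs.1], hs.2.trans ht.2⟩).hasDerivWithinAt)
      (fun s hs => mem_closedBall_zero_iff.2
        ((hgρ s ⟨by linarith [hs.1], hs.2.trans ht.2⟩).trans (by linarith)))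
      (fun s hs => ((hf s ⟨hs.1, by linarith [hs.2, ht.2]⟩).2.continuousWithinAt.mono
        (Icc_subset_Icc_right (by linarith [ht.2]))))
      (fun s hs => (hf s ⟨hs.1, by linarith [hs.2, ht.2]⟩).2.mono_of_mem_nhdsWithin
        (Icc_mem_nhdsGE_of_mem ⟨hs.1, by linarith [hs.2, ht.2]⟩))
      (fun s hs => (hf s ⟨hs.1, by linarith [hs.2, ht.2]⟩).1) hf₀.symm ⟨ht.1, le_rfl⟩
  refine ⟨b + δ / 2, by linarith, _, fun t ht => piecewise_eq_of_mem (Iio b) g f ht,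
    hasDerivAt_piecewise_of_eqOn (by linarith) hg (fun t ht => ?_) hgf⟩
  exact (hf t (Ioo_subset_Icc_self ht)).2.hasDerivAt (Icc_mem_nhds ht.1 ht.2)

end ODEContinuation

section ProfileEquation

open Function

variable {n : ℕ} {α b : ℝ} {φ : ℝ → ℝ}

def profileField (n : ℕ) (y : ℝ) (x : ℝ × ℝ) : ℝ × ℝ :=
  (x.2, -(((n : ℝ) + 1) / y - y / 2) * x.2 - n * x.1 ^ 2 - y * x.1 * x.2 + x.1)

theorem contDiffOn_profileField : ContDiffOn ℝ 1 (uncurry (profileField n)) (Ioi 0 ×ˢ univ) := by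
  have h : ∀ p ∈ Ioi (0 : ℝ) ×ˢ (univ : Set (ℝ × ℝ)), p.1 ≠ 0 := fun p hp => (mem_Ioi.1 hp.1).ne'
  unfold profileField uncurry
  fun_prop (disch := exact h)

def profilePotential (n : ℕ) (x : ℝ) : ℝ := n * x ^ 3 / 3 - x ^ 2 / 2

def profileEnergy (n : ℕ) (φ : ℝ → ℝ) (y : ℝ) : ℝ := deriv φ y ^ 2 / 2 + profilePotential n (φ y)

theorem neg_le_profilePotential (hn : 1 ≤ n) {m x : ℝ} (hm : m ≤ 0) (hx : m ≤ x) :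
    -(n * (-m) ^ 3 / 3 + m ^ 2 / 2 + 1) ≤ profilePotential n x := by
  have hn' : (1 : ℝ) ≤ n := by exact_mod_cast hn
  unfold profilePotential
  rcases le_total x 0 with hx0 | hx0
  · have h3 : (-x) ^ 3 ≤ (-m) ^ 3 := pow_le_pow_left₀ (by linarith) (by linarith) 3
    nlinarith
  · have hm3 : 0 ≤ (n : ℝ) * (-m) ^ 3 := mul_nonneg n.cast_nonneg (pow_nonneg (by linarith) 3)
    nlinarith [mul_nonneg (sq_nonneg (x - 1)) (by linarith : (0 : ℝ) ≤ 2 * x + 1),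
      mul_nonneg (sub_nonneg.2 hn') (pow_nonneg hx0 3)]

theorem le_of_profilePotential_le (hn : 1 ≤ n) {x B : ℝ} (h : profilePotential n x ≤ B) :
    x ≤ |B| + 3 := by
  have hn' : (1 : ℝ) ≤ n := by exact_mod_cast hn
  unfold profilePotential at h
  by_contra! hx
  have h3 : 3 < x := by linarith [abs_nonneg B]
  nlinarith [le_abs_self B, mul_nonneg (sub_nonneg.2 hn') (pow_nonneg (by linarith : 0 ≤ x) 3),
    mul_nonneg (sq_nonneg x) (by linarith : 0 ≤ x - 3)]

theorem exists_norm_le_of_profileEnergy_le (hn : 1 ≤ n) {s : Set ℝ} {m B : ℝ} (hm : m ≤ 0)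
    (hφm : ∀ y ∈ s, m ≤ φ y) (hE : ∀ y ∈ s, profileEnergy n φ y ≤ B) :
    ∃ ρ, ∀ y ∈ s, ‖(φ y, deriv φ y)‖ ≤ ρ := by
  set C := n * (-m) ^ 3 / 3 + m ^ 2 / 2 + 1 with hC_def
  have hC : 0 ≤ C := by
    have := mul_nonneg n.cast_nonneg (pow_nonneg (neg_nonneg.2 hm) 3)
    linarith [sq_nonneg m]
  refine ⟨|B| + 3 - m + (2 * (|B| + C) + 1), fun y hy => norm_prod_le_iff.2 ⟨?_, ?_⟩⟩
  · have hpot : profilePotential n (φ y) ≤ B := by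
      have := hE y hy
      unfold profileEnergy at this
      nlinarith [sq_nonneg (deriv φ y)]
    rw [Real.norm_eq_abs, abs_le]
    constructor <;> linarith [hφm y hy, le_of_profilePotential_le hn hpot, abs_nonneg B]
  · have hsq : deriv φ y ^ 2 ≤ 2 * (|B| + C) := by
      have := hE y hy
      unfold profileEnergy at this
      linarith [neg_le_profilePotential hn hm (hφm y hy), le_abs_self B, hC_def]
    rw [Real.norm_eq_abs]
    nlinarith [sq_abs (deriv φ y), sq_nonneg (|deriv φ y| - 1), abs_nonneg (φ y), abs_nonneg B]

namespace IsPhiSolOn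

theorem differentiableAt (hsol : IsPhiSolOn n α b φ) {y : ℝ} (hy : 0 ≤ y) (hyb : y < b) :
    DifferentiableAt ℝ φ y :=
  (hsol.2.2.1 y hy hyb).1

theorem differentiableAt_deriv (hsol : IsPhiSolOn n α b φ) {y : ℝ} (hy : 0 ≤ y) (hyb : y < b) :
    DifferentiableAt ℝ (deriv φ) y :=
  (hsol.2.2.1 y hy hyb).2

theorem deriv_deriv_eq (hsol : IsPhiSolOn n α b φ) {y : ℝ} (hy : 0 < y) (hyb : y < b) :
    deriv (deriv φ) y = (profileField n y (φ y, deriv φ y)).2 := by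
  have := hsol.2.2.2.2 y hy hyb
  simp only [profileField]
  linarith

theorem hasDerivAt_state (hsol : IsPhiSolOn n α b φ) {y : ℝ} (hy : 0 < y) (hyb : y < b) :
    HasDerivAt (fun y => (φ y, deriv φ y)) (profileField n y (φ y, deriv φ y)) y := by
  rw [show profileField n y (φ y, deriv φ y) = (deriv φ y, deriv (deriv φ) y) from
    Prod.ext rfl (hsol.deriv_deriv_eq hy hyb).symm]
  exact (hsol.differentiableAt hy.le hyb).hasDerivAt.prodMk
    (hsol.differentiableAt_deriv hy.le hyb).hasDerivAt

theorem hasDerivAt_profileEnergy (hsol : IsPhiSolOn n α b φ) {y : ℝ} (hy : 0 < y) (hyb : y < b) :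
    HasDerivAt (profileEnergy n φ)
      (-((((n : ℝ) + 1) / y - y / 2) + y * φ y) * deriv φ y ^ 2) y := by
  have hφ := (hsol.differentiableAt hy.le hyb).hasDerivAt
  have h := (((hsol.differentiableAt_deriv hy.le hyb).hasDerivAt.pow 2).div_const 2).add
    (((hφ.pow 3).const_mul (n : ℝ)).div_const 3 |>.sub ((hφ.pow 2).div_const 2))
  refine h.congr_deriv ?_
  rw [hsol.deriv_deriv_eq hy hyb]
  simp only [profileField]
  ring

theorem exists_profileEnergy_le (hsol : IsPhiSolOn n α b φ) (hn : 1 ≤ n) {c m : ℝ} (hc : 0 < c)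
    (hcb : c < b) (hm : m ≤ 0) (hφm : ∀ y ∈ Ico c b, m ≤ φ y) :
    ∃ B, ∀ y ∈ Ico c b, profileEnergy n φ y ≤ B := by
  -- `u` is the energy shifted by a bound for the potential on `[m, ∞)`, so that `φ'² ≤ 2u`
  set C := n * (-m) ^ 3 / 3 + m ^ 2 / 2 + 1 with hC_def
  set u := fun y => profileEnergy n φ y + C
  have hu_sq : ∀ y ∈ Ico c b, deriv φ y ^ 2 ≤ 2 * u y := fun y hy => by
    have := neg_le_profilePotential hn hm (hφm y hy)
    simp only [u, profileEnergy]
    linarith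
  have hu' : ∀ y ∈ Ico c b, -((((n : ℝ) + 1) / y - y / 2) + y * φ y) * deriv φ y ^ 2
      ≤ 2 * (b * (1 / 2 - m)) * u y := fun y hy => by
    have hy0 : 0 < y := hc.trans_le hy.1
    have hcoef : -((((n : ℝ) + 1) / y - y / 2) + y * φ y) ≤ b * (1 / 2 - m) := by
      have : 0 ≤ ((n : ℝ) + 1) / y := by positivity
      nlinarith [mul_le_mul_of_nonneg_left (hφm y hy) hy0.le, hy.2]
    calc _ ≤ b * (1 / 2 - m) * deriv φ y ^ 2 := by gcongr
      _ ≤ b * (1 / 2 - m) * (2 * u y) := by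
        gcongr
        · nlinarith
        · exact hu_sq y hy
      _ = _ := by ring
  have hgron := le_mul_exp_of_hasDerivAt_le_mul (by nlinarith) (fun y hy =>
    (hsol.hasDerivAt_profileEnergy (hc.trans_le hy.1) hy.2).add_const C) hu'
  exact ⟨|u c| * exp (2 * (b * (1 / 2 - m)) * (b - c)) - C, fun y hy => by
    linarith [hgron y hy]⟩

theorem of_eqOn_of_hasDerivAt (hsol : IsPhiSolOn n α b φ) {c b' : ℝ} (hc : 0 < c) (hcb : c < b)
    {h : ℝ → ℝ × ℝ} (hhφ : EqOn h (fun y => (φ y, deriv φ y)) (Iio b))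
    (hh : ∀ t ∈ Ioo c b', HasDerivAt h (profileField n t (h t)) t) :
    IsPhiSolOn n α b' (fun y => (h y).1) := by
  obtain ⟨hφ0, hφ'0, hdiff, hcont, hode⟩ := hsol
  set ψ := fun y => (h y).1
  have hψ : ∀ y < b, ψ =ᶠ[𝓝 y] φ := fun y hy =>
    eventuallyEq_of_mem (Iio_mem_nhds hy) fun z hz => congrArg Prod.fst (hhφ hz)
  have hψ' : ∀ t ∈ Ioo c b', HasDerivAt ψ (h t).2 t := fun t ht =>
    (hasFDerivAt_fst (p := h t)).comp_hasDerivAt t (hh t ht)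
  have hψ'' : ∀ t ∈ Ioo c b', HasDerivAt (deriv ψ) (profileField n t (h t)).2 t := fun t ht =>
    ((hasFDerivAt_snd (p := h t)).comp_hasDerivAt t (hh t ht)).congr_of_eventuallyEq
      (eventuallyEq_of_mem (isOpen_Ioo.mem_nhds ht) fun s hs => (hψ' s hs).deriv)
  have hψ''_cont : ∀ t ∈ Ioo c b', ContinuousAt (deriv (deriv ψ)) t := fun t ht => by
    refine ContinuousAt.congr ?_ (eventuallyEq_of_mem (isOpen_Ioo.mem_nhds ht)
      fun s hs => (hψ'' s hs).deriv).symm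
    refine continuous_snd.continuousAt.comp (f := fun s => uncurry (profileField n) (s, h s)) ?_
    exact (contDiffOn_profileField.continuousOn.continuousAt ((isOpen_Ioi.prod isOpen_univ).mem_nhds
      ⟨hc.trans ht.1, trivial⟩)).comp (continuousAt_id.prodMk (hh t ht).continuousAt)
  refine ⟨(hψ 0 (hc.trans hcb)).eq_of_nhds.trans hφ0,
    (hψ 0 (hc.trans hcb)).deriv_eq.trans hφ'0, fun y hy hyb' => ?_, fun y hy => ?_,
    fun y hy hyb' => ?_⟩
  · rcases lt_or_ge y b with hyb | hyb
    · exact ⟨(hψ y hyb).differentiableAt_iff.2 (hdiff y hy hyb).1,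
        (hψ y hyb).deriv.differentiableAt_iff.2 (hdiff y hy hyb).2⟩
    · exact ⟨(hψ' y ⟨hcb.trans_le hyb, hyb'⟩).differentiableAt,
        (hψ'' y ⟨hcb.trans_le hyb, hyb'⟩).differentiableAt⟩
  · rcases lt_or_ge y b with hyb | hyb
    · refine ((hcont y ⟨hy.1, hyb⟩).congr_of_eventuallyEq ?_ ?_).mono_of_mem_nhdsWithin ?_
      · exact nhdsWithin_le_nhds (hψ y hyb).deriv.deriv
      · exact (hψ y hyb).deriv.deriv.eq_of_nhds
      · exact mem_nhdsWithin.2 ⟨Iio b, isOpen_Iio, hyb, fun z hz => ⟨hz.2.1, hz.1⟩⟩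
    · exact (hψ''_cont y ⟨hcb.trans_le hyb, hy.2⟩).continuousWithinAt
  · rcases lt_or_ge y b with hyb | hyb
    · rw [(hψ y hyb).eq_of_nhds, (hψ y hyb).deriv_eq, (hψ y hyb).deriv.deriv_eq]
      exact hode y hy hyb
    · have ht : y ∈ Ioo c b' := ⟨hcb.trans_le hyb, hyb'⟩
      rw [(hψ'' y ht).deriv, (hψ' y ht).deriv]
      simp only [profileField, ψ]
      ring

theorem exists_extension_of_bddBelow (hsol : IsPhiSolOn n α b φ) (hn : 1 ≤ n) {c : ℝ}
    (hc : 0 < c) (hcb : c < b) (hbdd : BddBelow (φ '' Ico c b)) :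
    ∃ b' > b, ∃ ψ : ℝ → ℝ, EqOn ψ φ (Ico 0 b) ∧ IsPhiSolOn n α b' ψ := by
  obtain ⟨m₀, hm₀⟩ := hbdd
  have hφm : ∀ y ∈ Ico c b, min m₀ 0 ≤ φ y := fun y hy =>
    (min_le_left _ _).trans (hm₀ ⟨y, hy, rfl⟩)
  obtain ⟨B, hB⟩ := hsol.exists_profileEnergy_le hn hc hcb (min_le_right _ _) hφm
  obtain ⟨ρ, hρ⟩ := exists_norm_le_of_profileEnergy_le hn (min_le_right _ _) hφm hB
  obtain ⟨b', hb', h, hhφ, hh⟩ := exists_hasDerivAt_extension_of_norm_le hcb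
    (contDiffOn_profileField.mono (prod_mono (Ioi_subset_Ioi hc.le) subset_rfl))
    (fun t ht => hsol.hasDerivAt_state (hc.trans ht.1) ht.2)
    fun t ht => hρ t (Ioo_subset_Ico_self ht)
  exact ⟨b', hb', _, fun y hy => congrArg Prod.fst (hhφ hy.2),
    hsol.of_eqOn_of_hasDerivAt hc hcb hhφ hh⟩

theorem deriv_neg_of_neg (hsol : IsPhiSolOn n α b φ) {y₀ : ℝ} (hy₀ : 0 < y₀) (hφ : φ y₀ < 0)
    (hφ' : deriv φ y₀ < 0) : ∀ y ∈ Ico y₀ b, deriv φ y < 0 := by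
  intro t ht
  by_contra! ht'
  have hd : ∀ y ∈ Icc y₀ t, DifferentiableAt ℝ φ y ∧ DifferentiableAt ℝ (deriv φ) y :=
    fun y hy => hsol.2.2.1 y (hy₀.le.trans hy.1) (hy.2.trans_lt ht.2)
  obtain ⟨z, hz, hz0, hneg⟩ := ContinuousOn.exists_first_zero ht.1
    (fun y hy => (hd y hy).2.continuousAt.continuousWithinAt) hφ' ht'
  have hφz : φ z < 0 := by
    refine lt_trans (strictAntiOn_of_deriv_neg (convex_Icc y₀ z)
      (fun y hy => (hd y (Icc_subset_Icc_right hz.2 hy)).1.continuousAt.continuousWithinAt)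
      (fun y hy => hneg y ?_) (left_mem_Icc.2 hz.1.le) (right_mem_Icc.2 hz.1.le) hz.1) hφ
    rw [interior_Icc] at hy
    exact ⟨hy.1.le, hy.2⟩
  have hφ''z : deriv (deriv φ) z < 0 := by
    rw [hsol.deriv_deriv_eq (hy₀.trans hz.1) (hz.2.trans_lt ht.2)]
    simp only [profileField, hz0]
    nlinarith [mul_nonneg n.cast_nonneg (sq_nonneg (φ z))]
  have := (hd z ⟨hz.1.le, hz.2⟩).2.hasDerivAt.nonneg_of_forall_mem_Ioo_le hz.1
    fun y hy => hz0 ▸ (hneg y ⟨hy.1.le, hy.2⟩).le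
  linarith

theorem exists_neg_deriv_neg (hsol : IsPhiSolOn n α b φ) (hα : 0 ≤ α) {y₁ : ℝ}
    (hy₁ : y₁ ∈ Ioo 0 b) (hφ : φ y₁ < 0) : ∃ y₀ ∈ Ioo 0 y₁, φ y₀ < 0 ∧ deriv φ y₀ < 0 := by
  have hd : ∀ y ∈ Icc 0 y₁, DifferentiableAt ℝ φ y :=
    fun y hy => hsol.differentiableAt hy.1 (hy.2.trans_lt hy₁.2)
  obtain ⟨z, hz, hφz, hneg⟩ := ContinuousOn.exists_last_nonneg hy₁.1.le
    (fun y hy => (hd y hy).continuousAt.continuousWithinAt) (hsol.1 ▸ hα) hφ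
  obtain ⟨ξ, hξ, hφ'ξ⟩ := exists_deriv_eq_slope φ hz.2
    (fun y hy => (hd y (Icc_subset_Icc_left hz.1 hy)).continuousAt.continuousWithinAt)
    fun y hy => (hd y (Icc_subset_Icc_left hz.1 (Ioo_subset_Icc_self hy))).differentiableWithinAt
  refine ⟨ξ, ⟨hz.1.trans_lt hξ.1, hξ.2⟩, hneg ξ ⟨hξ.1, hξ.2.le⟩, ?_⟩
  rw [hφ'ξ]
  exact div_neg_of_neg_of_pos (by linarith) (sub_pos.2 hz.2)

end IsPhiSolOn

end ProfileEquation

/-- Lemma 7.2: blow-up of the profile at a finite maximal existence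
time. Let `n ≥ 3`, `α > 0`, and let `φ` be the maximal solution of the initial value
problem on `[0, y*)`. If `y* < ∞`, then `φ(y) → +∞` or `φ(y) → -∞` as `y → y*⁻`. -/
theorem statement17
    (n : ℕ) (hn3 : 3 ≤ n)
    (α : ℝ) (hα : 0 < α)
    (φ : ℝ → ℝ) (ystar : ℝ) (hy : 0 < ystar)
    (hsol : IsPhiSolOn n α ystar φ)
    (hmax : ∀ b : ℝ, ystar < b → ∀ ψ : ℝ → ℝ,
      Set.EqOn ψ φ (Ico 0 ystar) → ¬ IsPhiSolOn n α b ψ) :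
    Tendsto φ (𝓝[<] ystar) atTop ∨ Tendsto φ (𝓝[<] ystar) atBot := by
  have hunbdd : ∀ c ∈ Ioo 0 ystar, ¬ BddBelow (φ '' Ico c ystar) := fun c hc hbdd =>
    let ⟨b, hb, ψ, hψφ, hψ⟩ := hsol.exists_extension_of_bddBelow (by omega) hc.1 hc.2 hbdd
    hmax b hb ψ hψφ hψ
  obtain ⟨_, ⟨y₁, hy₁, rfl⟩, hφy₁⟩ :=
    not_bddBelow_iff.1 (hunbdd (ystar / 2) ⟨half_pos hy, half_lt_self hy⟩) 0
  obtain ⟨y₀, hy₀, hφy₀, hφ'y₀⟩ :=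
    hsol.exists_neg_deriv_neg hα.le ⟨(half_pos hy).trans_le hy₁.1, hy₁.2⟩ hφy₁
  have hanti : StrictAntiOn φ (Ico y₀ ystar) :=
    strictAntiOn_of_deriv_neg (convex_Ico y₀ ystar)
      (fun y hy =>
        (hsol.differentiableAt (hy₀.1.le.trans hy.1) hy.2).continuousAt.continuousWithinAt)
      fun y hy => hsol.deriv_neg_of_neg hy₀.1 hφy₀ hφ'y₀ y (interior_subset hy)
  exact Or.inr (hanti.antitoneOn.tendsto_nhdsLT_atBot (hunbdd y₀ ⟨hy₀.1, hy₀.2.trans hy₁.2⟩))
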